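/- Let F = (A,R,S) be a BSAF, (T,h) ∈ R, and F' = (A,R',S) with R' = (R \ {(T,h)}) ∪ {(cl(T),h)}. Then the complete extensions of F and F' coincide: com(F) = com(F'). Consequently the grounded extensions also coincide, and since adm(F)=adm(F'), the preferred extensions coincide. -/
import Mathlib


variable {α : Type*}

/-- A bipolar set-argumentation framework: arguments `A`, collective attacks `R`,
collective supports `S`. -/
structure BSAF (α : Type*) where
  A : Set α
  R : Set (Set α × α)
  S : Set (Set α × α)

namespace BSAF

/-- Membership in the least superset of `E` that is closed under the supports of `F`. -/
inductive InCl (F : BSAF α) (E : Set α) : α → Prop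
  | base {a : α} : a ∈ E → InCl F E a
  | step {T : Set α} {h : α} : (T, h) ∈ F.S → (∀ t ∈ T, InCl F E t) → InCl F E h

/-- The closure of `E` under the supports of `F`. -/
def cl (F : BSAF α) (E : Set α) : Set α := {a | F.InCl E a}

/-- `E` is closed if its closure equals itself. -/
def Closed (F : BSAF α) (E : Set α) : Prop := F.cl E = E

/-- `E` attacks the set `D`. -/
def Attacks (F : BSAF α) (E D : Set α) : Prop :=
  ∃ T h, (T, h) ∈ F.R ∧ T ⊆ E ∧ h ∈ D

/-- `E` is conflict-free: it does not attack itself. -/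
def ConflictFree (F : BSAF α) (E : Set α) : Prop :=
  ¬ ∃ T h, (T, h) ∈ F.R ∧ T ⊆ E ∧ h ∈ E

/-- `E` defends `a`: every closed attacker of `a` is attacked by `E`. -/
def Defends (F : BSAF α) (E : Set α) (a : α) : Prop :=
  ∀ D : Set α, D ⊆ F.A → F.Closed D → (∃ T, (T, a) ∈ F.R ∧ T ⊆ D) → F.Attacks E D

/-- `E` is admissible: conflict-free, closed, and defends each of its members. -/
def Admissible (F : BSAF α) (E : Set α) : Prop :=
  E ⊆ F.A ∧ F.ConflictFree E ∧ F.Closed E ∧ ∀ a ∈ E, F.Defends E a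

/-- `E` is complete: admissible and contains every argument it defends. -/
def Complete (F : BSAF α) (E : Set α) : Prop :=
  F.Admissible E ∧ ∀ a ∈ F.A, F.Defends E a → a ∈ E

/-- Grounded: ⊆-minimal complete. -/
def Grounded (F : BSAF α) (E : Set α) : Prop :=
  F.Complete E ∧ ∀ E', F.Complete E' → E' ⊆ E → E' = E

/-- Preferred: ⊆-maximal admissible. -/
def Preferred (F : BSAF α) (E : Set α) : Prop :=
  F.Admissible E ∧ ∀ E', F.Admissible E' → E ⊆ E' → E' = E

/-- Stable: admissible and attacks every outside argument. -/
def Stable (F : BSAF α) (E : Set α) : Prop :=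
  F.Admissible E ∧ ∀ x ∈ F.A \ E, ∃ T, (T, x) ∈ F.R ∧ T ⊆ E

end BSAF

namespace BSAF

lemma subset_cl' (F : BSAF α) (E : Set α) : E ⊆ F.cl E := fun _ ha => InCl.base ha

lemma cl_mono' (F : BSAF α) {E D : Set α} (hED : E ⊆ F.cl D) : F.cl E ⊆ F.cl D := by
  intro a ha
  induction ha with
  | base hx => exact hED hx
  | step hS _ ih => exact InCl.step hS ih

lemma cl_congr' {F G : BSAF α} (hS : F.S = G.S) : F.cl = G.cl := by
  funext E
  ext a
  constructor
  · intro ha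
    induction ha with
    | base hx => exact InCl.base hx
    | step hT _ ih => exact InCl.step (hS ▸ hT) ih
  · intro ha
    induction ha with
    | base hx => exact InCl.base hx
    | step hT _ ih => exact InCl.step (hS ▸ hT) ih

end BSAF

/-- Closing a single attack preserves complete, grounded, and preferred extensions. -/
theorem BSAF.closeAttack_complete_grounded_preferred (F : BSAF α) (hfin : F.A.Finite)
    (T : Set α) (h : α) (hTh : (T, h) ∈ F.R) :
    (∀ E : Set α, F.Complete E ↔
        (BSAF.mk F.A ((F.R \ {(T, h)}) ∪ {(F.cl T, h)}) F.S).Complete E) ∧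
    (∀ E : Set α, F.Grounded E ↔
        (BSAF.mk F.A ((F.R \ {(T, h)}) ∪ {(F.cl T, h)}) F.S).Grounded E) ∧
    (∀ E : Set α, F.Preferred E ↔
        (BSAF.mk F.A ((F.R \ {(T, h)}) ∪ {(F.cl T, h)}) F.S).Preferred E) := by
  set F' : BSAF α := BSAF.mk F.A ((F.R \ {(T, h)}) ∪ {(F.cl T, h)}) F.S with hF'
  have hcl : F'.cl = F.cl := cl_congr' rfl
  have hclosed : ∀ E, F.Closed E ↔ F'.Closed E := by
    intro E; unfold Closed; rw [hcl]
  -- key: for closed D, membership of attackers of any head in R vs R' is equivalent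
  have hexist : ∀ (D : Set α) (a : α), F.Closed D →
      ((∃ T', (T', a) ∈ F.R ∧ T' ⊆ D) ↔ (∃ T', (T', a) ∈ F'.R ∧ T' ⊆ D)) := by
    intro D a hD
    constructor
    · rintro ⟨T', hR, hTD⟩
      by_cases heq : (T', a) = (T, h)
      · rw [Prod.mk.injEq] at heq
        obtain ⟨h1, h2⟩ := heq
        refine ⟨F.cl T, Or.inr (by rw [h2]; rfl), ?_⟩
        have : F.cl T ⊆ F.cl D := cl_mono' F ((h1 ▸ hTD : T ⊆ D).trans (subset_cl' F D))
        rwa [hD] at this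
      · exact ⟨T', Or.inl ⟨hR, heq⟩, hTD⟩
    · rintro ⟨T', hR, hTD⟩
      rcases hR with ⟨hR, _⟩ | hR
      · exact ⟨T', hR, hTD⟩
      · have heq : (T', a) = (F.cl T, h) := hR
        rw [Prod.mk.injEq] at heq
        obtain ⟨h1, h2⟩ := heq
        exact ⟨T, by rw [h2]; exact hTh, (subset_cl' F T).trans (h1 ▸ hTD)⟩
  have hatt : ∀ E D, F.Closed E → (F.Attacks E D ↔ F'.Attacks E D) := by
    intro E D hE
    constructor
    · rintro ⟨T', h', hR, hTE, hhD⟩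
      obtain ⟨T'', hR', hTE'⟩ := (hexist E h' hE).mp ⟨T', hR, hTE⟩
      exact ⟨T'', h', hR', hTE', hhD⟩
    · rintro ⟨T', h', hR, hTE, hhD⟩
      obtain ⟨T'', hR', hTE'⟩ := (hexist E h' hE).mpr ⟨T', hR, hTE⟩
      exact ⟨T'', h', hR', hTE', hhD⟩
  have hcf : ∀ E, F.Closed E → (F.ConflictFree E ↔ F'.ConflictFree E) := by
    intro E hE
    exact not_congr (hatt E E hE)
  have hdef : ∀ E a, F.Closed E → (F.Defends E a ↔ F'.Defends E a) := by
    intro E a hE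
    constructor
    · intro hd D hDA hDc hex
      exact (hatt E D hE).mp (hd D hDA ((hclosed D).mpr hDc)
        ((hexist D a ((hclosed D).mpr hDc)).mpr hex))
    · intro hd D hDA hDc hex
      exact (hatt E D hE).mpr (hd D hDA ((hclosed D).mp hDc)
        ((hexist D a hDc).mp hex))
  have hadm : ∀ E, F.Admissible E ↔ F'.Admissible E := by
    intro E
    constructor
    · rintro ⟨h1, h2, h3, h4⟩
      exact ⟨h1, (hcf E h3).mp h2, (hclosed E).mp h3, fun a ha => (hdef E a h3).mp (h4 a ha)⟩
    · rintro ⟨h1, h2, h3, h4⟩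
      have h3' : F.Closed E := (hclosed E).mpr h3
      exact ⟨h1, (hcf E h3').mpr h2, h3', fun a ha => (hdef E a h3').mpr (h4 a ha)⟩
  have hcom : ∀ E, F.Complete E ↔ F'.Complete E := by
    intro E
    constructor
    · rintro ⟨ha, hb⟩
      exact ⟨(hadm E).mp ha, fun a haA hd => hb a haA ((hdef E a ha.2.2.1).mpr hd)⟩
    · rintro ⟨ha, hb⟩
      have ha' := (hadm E).mpr ha
      exact ⟨ha', fun a haA hd => hb a haA ((hdef E a ha'.2.2.1).mp hd)⟩
  refine ⟨hcom, ?_, ?_⟩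
  · intro E
    constructor
    · rintro ⟨h1, h2⟩
      exact ⟨(hcom E).mp h1, fun E' hE' hsub => h2 E' ((hcom E').mpr hE') hsub⟩
    · rintro ⟨h1, h2⟩
      exact ⟨(hcom E).mpr h1, fun E' hE' hsub => h2 E' ((hcom E').mp hE') hsub⟩
  · intro E
    constructor
    · rintro ⟨h1, h2⟩
      exact ⟨(hadm E).mp h1, fun E' hE' hsub => h2 E' ((hadm E').mpr hE') hsub⟩
    · rintro ⟨h1, h2⟩
      exact ⟨(hadm E).mpr h1, fun E' hE' hsub => h2 E' ((hadm E').mp hE') hsub⟩
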